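/- Completeness for normal forms: if t₁, t₂ ∈ NF and t₁ ⊏̃_RS t₂ (t₁ is stable-ready-simulated by t₂), then ⊢ t₁ ≤ t₂ is derivable in AX_CLL. -/

import Mathlib

open Classical

/-- Visible actions plus the invisible action τ. -/
inductive ActT (Act : Type) : Type where
  | act : Act → ActT Act
  | tau : ActT Act

/-- Processes of the recursion-free calculus CLL. -/
inductive Proc (Act : Type) : Type where
  | nil  : Proc Act                                -- 0
  | bot  : Proc Act                                -- ⊥
  | pre  : ActT Act → Proc Act → Proc Act          -- α.t
  | ec   : Proc Act → Proc Act → Proc Act          -- t □ t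
  | conj : Proc Act → Proc Act → Proc Act          -- t ∧ t
  | disj : Proc Act → Proc Act → Proc Act          -- t ∨ t
  | par  : Set Act → Proc Act → Proc Act → Proc Act -- t ∥_A t

namespace Proc

variable {Act : Type}

/-- Whether a process has a τ-transition (structural stratification used for
the negative premises of the SOS rules). -/
def hasTau : Proc Act → Prop
  | nil => False
  | bot => False
  | pre a _ => a = ActT.tau
  | ec t₁ t₂ => hasTau t₁ ∨ hasTau t₂
  | conj t₁ t₂ => hasTau t₁ ∨ hasTau t₂
  | disj _ _ => True
  | par _ t₁ t₂ => hasTau t₁ ∨ hasTau t₂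

/-- The transition relation, given by the SOS rules of CLL_R. -/
inductive Trans : Proc Act → ActT Act → Proc Act → Prop where
  | pre : Trans (pre α t) α t
  | ecL : Trans t₁ (ActT.act a) t₁' → ¬ hasTau t₂ →
      Trans (ec t₁ t₂) (ActT.act a) t₁'
  | ecR : ¬ hasTau t₁ → Trans t₂ (ActT.act a) t₂' →
      Trans (ec t₁ t₂) (ActT.act a) t₂'
  | ecTauL : Trans t₁ ActT.tau t₁' → Trans (ec t₁ t₂) ActT.tau (ec t₁' t₂)
  | ecTauR : Trans t₂ ActT.tau t₂' → Trans (ec t₁ t₂) ActT.tau (ec t₁ t₂')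
  | conjAct : Trans t₁ (ActT.act a) t₁' → Trans t₂ (ActT.act a) t₂' →
      Trans (conj t₁ t₂) (ActT.act a) (conj t₁' t₂')
  | conjTauL : Trans t₁ ActT.tau t₁' → Trans (conj t₁ t₂) ActT.tau (conj t₁' t₂)
  | conjTauR : Trans t₂ ActT.tau t₂' → Trans (conj t₁ t₂) ActT.tau (conj t₁ t₂')
  | disjL : Trans (disj t₁ t₂) ActT.tau t₁
  | disjR : Trans (disj t₁ t₂) ActT.tau t₂
  | parTauL : Trans t₁ ActT.tau t₁' → Trans (par A t₁ t₂) ActT.tau (par A t₁' t₂)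
  | parTauR : Trans t₂ ActT.tau t₂' → Trans (par A t₁ t₂) ActT.tau (par A t₁ t₂')
  | parL : a ∉ A → Trans t₁ (ActT.act a) t₁' → ¬ hasTau t₂ →
      Trans (par A t₁ t₂) (ActT.act a) (par A t₁' t₂)
  | parR : a ∉ A → ¬ hasTau t₁ → Trans t₂ (ActT.act a) t₂' →
      Trans (par A t₁ t₂) (ActT.act a) (par A t₁ t₂')
  | parSync : a ∈ A → Trans t₁ (ActT.act a) t₁' → Trans t₂ (ActT.act a) t₂' →
      Trans (par A t₁ t₂) (ActT.act a) (par A t₁' t₂')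

/-- The ready set I(p). -/
def ready (p : Proc Act) : Set (ActT Act) := {α | ∃ q, Trans p α q}

/-- p is stable if it has no τ-transition. -/
def Stable (p : Proc Act) : Prop := ∀ q, ¬ Trans p ActT.tau q

/-- The inconsistency predicate F, as the least predicate closed under the
predicative rules of CLL_R. -/
inductive Fp : Proc Act → Prop where
  | bot : Fp bot
  | pre : Fp t → Fp (pre α t)
  | disj : Fp t₁ → Fp t₂ → Fp (disj t₁ t₂)
  | ecL : Fp t₁ → Fp (ec t₁ t₂)
  | ecR : Fp t₂ → Fp (ec t₁ t₂)
  | parL : Fp t₁ → Fp (par A t₁ t₂)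
  | parR : Fp t₂ → Fp (par A t₁ t₂)
  | conjL : Fp t₁ → Fp (conj t₁ t₂)
  | conjR : Fp t₂ → Fp (conj t₁ t₂)
  | conjReady : Stable (conj t₁ t₂) → ready t₁ ≠ ready t₂ → Fp (conj t₁ t₂)
  | conjSucc : Trans (conj t₁ t₂) α s → (∀ y, Trans (conj t₁ t₂) α y → Fp y) →
      Fp (conj t₁ t₂)
  | conjStable :
      (∀ y, Relation.ReflTransGen (fun x z => Trans x ActT.tau z) (conj t₁ t₂) y →
        Stable y → Fp y) →
      Fp (conj t₁ t₂)

/-- One τ-step with both endpoints consistent. -/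
def tauStepF (p q : Proc Act) : Prop := Trans p ActT.tau q ∧ ¬ Fp p ∧ ¬ Fp q

/-- p ⇒_F| q : a sequence of τ-transitions from p to q, all states outside F,
with q stable. -/
def epsF (p q : Proc Act) : Prop :=
  Relation.ReflTransGen tauStepF p q ∧ ¬ Fp p ∧ ¬ Fp q ∧ Stable q

/-- p =a⇒_F| q. -/
def wkF (a : Act) (p q : Proc Act) : Prop :=
  ∃ r s, Relation.ReflTransGen tauStepF p r ∧ ¬ Fp p ∧ ¬ Fp r ∧
    Trans r (ActT.act a) s ∧ ¬ Fp s ∧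
    Relation.ReflTransGen tauStepF s q ∧ ¬ Fp q ∧ Stable q

/-- R is a stable ready simulation. -/
def StableRS (R : Proc Act → Proc Act → Prop) : Prop :=
  ∀ p q, R p q →
    Stable p ∧ Stable q ∧
    (¬ Fp p → ¬ Fp q) ∧
    (∀ a p', wkF a p p' → ∃ q', wkF a q q' ∧ R p' q') ∧
    (¬ Fp p → ready p = ready q)

/-- p ⊏̃_RS q. -/
def rsLT (p q : Proc Act) : Prop := ∃ R, StableRS R ∧ R p q

/-- p ⊑_RS q. -/
def rsLE (p q : Proc Act) : Prop :=
  ∀ p', epsF p p' → ∃ q', epsF q q' ∧ rsLT p' q'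

/-- p =_RS q. -/
def rsEq (p q : Proc Act) : Prop := rsLE p q ∧ rsLE q p

/-- Basic process terms T(Σ_B): no ⊥ and no ∧. -/
inductive Basic : Proc Act → Prop where
  | nil : Basic nil
  | pre : Basic t → Basic (pre α t)
  | disj : Basic t₁ → Basic t₂ → Basic (disj t₁ t₂)
  | ec : Basic t₁ → Basic t₂ → Basic (ec t₁ t₂)
  | par : Basic t₁ → Basic t₂ → Basic (par A t₁ t₂)

/-- General external choice □ over a finite sequence (left-nested). -/
def ecList : List (Proc Act) → Proc Act
  | [] => nil
  | t :: ts => ts.foldl ec t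

/-- General disjunction ⋁ over a nonempty finite sequence (left-nested). -/
def djList : List (Proc Act) → Proc Act
  | [] => bot
  | t :: ts => ts.foldl disj t

/-- □_{i<n} a_i.t_i for a sequence of prefixed terms. -/
def ecPre (l : List (Act × Proc Act)) : Proc Act :=
  ecList (l.map fun x => pre (ActT.act x.1) x.2)

/-- The expansion term E = ((□Ω₁) □ (□Ω₂)) □ (□Ω₃). -/
noncomputable def expTerm (A : Set Act) (l₁ l₂ : List (Act × Proc Act)) : Proc Act :=
  ec (ec
      (ecList ((l₁.filter fun x => decide (x.1 ∉ A)).map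
        fun x => pre (ActT.act x.1) (par A x.2 (ecPre l₂))))
      (ecList ((l₂.filter fun x => decide (x.1 ∉ A)).map
        fun x => pre (ActT.act x.1) (par A (ecPre l₁) x.2))))
    (ecList (l₁.flatMap fun x =>
      (l₂.filter fun y => decide (y.1 = x.1 ∧ x.1 ∈ A)).map
        fun y => pre (ActT.act x.1) (par A x.2 y.2)))

/-- Normal forms NF_B. -/
inductive NFB : Proc Act → Prop where
  | mk (ls : List (List (Act × Proc Act))) (hne : ls ≠ [])
      (hnodup : ∀ l ∈ ls, (l.map Prod.fst).Nodup)
      (hsub : ∀ l ∈ ls, ∀ x ∈ l, NFB x.2) :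
      NFB (djList (ls.map ecPre))

/-- NF = NF_B ∪ {⊥}. -/
def NF (p : Proc Act) : Prop := NFB p ∨ p = bot

/-- Derivability ⊢ t ≤ t' in the proof system AX_CLL. -/
inductive Deriv : Proc Act → Proc Act → Prop where
  | refl (t) : Deriv t t
  | trans : Deriv t t' → Deriv t' t'' → Deriv t t''
  | mono_pre : Deriv t t' → Deriv (pre α t) (pre α t')
  | mono_ec : Deriv s s' → Deriv t t' → Deriv (ec s t) (ec s' t')
  | mono_conj : Deriv s s' → Deriv t t' → Deriv (conj s t) (conj s' t')
  | mono_disj : Deriv s s' → Deriv t t' → Deriv (disj s t) (disj s' t')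
  | mono_par : Deriv s s' → Deriv t t' → Deriv (par A s t) (par A s' t')
  -- external choice
  | ec_comm : Deriv (ec x y) (ec y x)
  | ec_assoc₁ : Deriv (ec (ec x y) z) (ec x (ec y z))
  | ec_assoc₂ : Deriv (ec x (ec y z)) (ec (ec x y) z)
  | ec_idem₁ : Deriv (ec x x) x
  | ec_idem₂ : Deriv x (ec x x)
  | ec_nil₁ : Deriv (ec x nil) x
  | ec_nil₂ : Deriv x (ec x nil)
  | ec_bot₁ : Deriv (ec x bot) bot
  | ec_bot₂ : Deriv bot (ec x bot)
  -- disjunction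
  | disj_comm : Deriv (disj x y) (disj y x)
  | disj_assoc₁ : Deriv (disj x (disj y z)) (disj (disj x y) z)
  | disj_assoc₂ : Deriv (disj (disj x y) z) (disj x (disj y z))
  | disj_idem₁ : Deriv (disj x x) x
  | disj_idem₂ : Deriv x (disj x x)
  | disj_bot₁ : Deriv (disj x bot) x
  | disj_bot₂ : Deriv x (disj x bot)
  | disj_le : Deriv x (disj x y)
  -- conjunction
  | conj_comm : Deriv (conj x y) (conj y x)
  | conj_idem₁ : Deriv (conj x x) x
  | conj_idem₂ : Deriv x (conj x x)
  | conj_bot₁ : Deriv (conj x bot) bot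
  | conj_bot₂ : Deriv bot (conj x bot)
  -- prefixing
  | pre_bot₁ : Deriv (pre (ActT.act a) bot) bot
  | pre_bot₂ : Deriv bot (pre (ActT.act a) bot)
  | tau_pre₁ : Deriv (pre ActT.tau x) x
  | tau_pre₂ : Deriv x (pre ActT.tau x)
  -- parallel
  | par_comm : Deriv (par A x y) (par A y x)
  | par_bot₁ : Deriv (par A x bot) bot
  | par_bot₂ : Deriv bot (par A x bot)
  -- distribution over disjunction
  | ds_ec : Deriv (ec x (disj y z)) (disj (ec x y) (ec x z))
  | ds_conj : Deriv (conj x (disj y z)) (disj (conj x y) (conj x z))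
  | ds_par : Deriv (par A x (disj y z)) (disj (par A x y) (par A x z))
  | ds_pre : Basic x → Basic y →
      Deriv (pre (ActT.act a) (disj x y)) (ec (pre (ActT.act a) x) (pre (ActT.act a) y))
  -- external choice and conjunction
  | ecc1₁ (l₁ l₂ : List (Act × Proc Act)) :
      {a | a ∈ l₁.map Prod.fst} ≠ {a | a ∈ l₂.map Prod.fst} →
      Deriv (conj (ecPre l₁) (ecPre l₂)) bot
  | ecc1₂ (l₁ l₂ : List (Act × Proc Act)) :
      {a | a ∈ l₁.map Prod.fst} ≠ {a | a ∈ l₂.map Prod.fst} →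
      Deriv bot (conj (ecPre l₁) (ecPre l₂))
  | ecc2 (l : List (Act × Proc Act × Proc Act)) :
      Deriv (ecPre (l.map fun x => (x.1, conj x.2.1 x.2.2)))
            (conj (ecPre (l.map fun x => (x.1, x.2.1)))
                  (ecPre (l.map fun x => (x.1, x.2.2))))
  | ecc3 (l : List (Act × Proc Act × Proc Act)) :
      (l.map Prod.fst).Nodup →
      Deriv (conj (ecPre (l.map fun x => (x.1, x.2.1)))
                  (ecPre (l.map fun x => (x.1, x.2.2))))
            (ecPre (l.map fun x => (x.1, conj x.2.1 x.2.2)))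
  -- expansion
  | exp1 (A : Set Act) (l₁ l₂ : List (Act × Proc Act)) :
      Deriv (par A (ecPre l₁) (ecPre l₂)) (expTerm A l₁ l₂)
  | exp2 (A : Set Act) (l₁ l₂ : List (Act × Proc Act)) :
      (∀ x ∈ l₁, Basic x.2) → (∀ x ∈ l₂, Basic x.2) →
      Deriv (expTerm A l₁ l₂) (par A (ecPre l₁) (ecPre l₂))

end Proc

/-!
A consistent normal form is a disjunction of stable external choices `□ aᵢ.tᵢ` with pairwise
distinct prefixes, and these disjuncts are exactly its stable τ-derivatives. This makes the
stronger completeness for `⊑_RS` (`rsLE`) provable by induction on the normal form `t`: every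
disjunct of `t` is stable-ready-simulated by some disjunct of `u`. Equal ready sets make the
prefix lists of two such choices permutations of each other, and because prefixes are
injective, the weak `a`-transitions of the simulation give `tᵢ ⊑_RS uⱼ` for the continuations
under a common prefix `a`. The induction hypothesis, monotonicity of prefixing and `□`,
commutativity and associativity of `□`, and the join laws of `∨` then assemble `⊢ t ≤ u`.
Between stable consistent processes `⊏̃_RS` implies `⊑_RS`, and `⊥` lies below everything.
-/

theorem List.exists_perm_map_eq_of_perm {α β : Type*} {f : α → β} :
    ∀ {K : List β} {l : List α}, (l.map f).Perm K → ∃ l', l.Perm l' ∧ l'.map f = K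
  | [], l, h => ⟨l, .refl l, h.eq_nil⟩
  | b :: K, l, h => by
      classical
      obtain ⟨a, ha, rfl⟩ := List.mem_map.1 (h.mem_iff.2 List.mem_cons_self)
      have hl := List.perm_cons_erase ha
      obtain ⟨l', hl', rfl⟩ :=
        List.exists_perm_map_eq_of_perm ((List.perm_cons _).1 ((hl.map f).symm.trans h))
      exact ⟨a :: l', hl.trans (hl'.cons a), rfl⟩

namespace Proc

variable {Act : Type}

theorem hasTau_of_trans_tau {p q : Proc Act} (h : Trans p ActT.tau q) : hasTau p := by
  generalize hα : ActT.tau = α at h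
  induction h <;> simp_all [hasTau]

theorem trans_pre_iff {α β : ActT Act} {t z : Proc Act} :
    Trans (pre β t) α z ↔ α = β ∧ z = t := by
  constructor
  · rintro ⟨⟩
    exact ⟨rfl, rfl⟩
  · rintro ⟨rfl, rfl⟩
    exact .pre

theorem trans_ec_iff {x y z : Proc Act} {α : ActT Act} (hx : ¬ hasTau x) (hy : ¬ hasTau y) :
    Trans (ec x y) α z ↔ Trans x α z ∨ Trans y α z := by
  constructor
  · intro h
    cases h with
    | ecL h _ => exact .inl h
    | ecR _ h => exact .inr h
    | ecTauL h => exact absurd (hasTau_of_trans_tau h) hx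
    | ecTauR h => exact absurd (hasTau_of_trans_tau h) hy
  · rintro (h | h) <;> cases α
    · exact .ecL h hy
    · exact absurd (hasTau_of_trans_tau h) hx
    · exact .ecR hx h
    · exact absurd (hasTau_of_trans_tau h) hy

theorem trans_foldl_ec_iff {z : Proc Act} {α : ActT Act} :
    ∀ {L : List (Proc Act)} {x : Proc Act}, (∀ y ∈ x :: L, ¬ hasTau y) →
      (Trans (L.foldl ec x) α z ↔ ∃ w ∈ x :: L, Trans w α z)
  | [], x, _ => by simp
  | y :: L, x, h => by
      have hx := h x (by simp)
      have hy := h y (by simp)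
      rw [List.foldl_cons, trans_foldl_ec_iff (by simpa [hasTau, hx, hy] using h)]
      simp [trans_ec_iff hx hy, or_assoc]

theorem trans_ecList_iff {L : List (Proc Act)} {α : ActT Act} {z : Proc Act}
    (h : ∀ y ∈ L, ¬ hasTau y) : Trans (ecList L) α z ↔ ∃ w ∈ L, Trans w α z := by
  cases L with
  | nil => exact ⟨nofun, by simp⟩
  | cons x L => exact trans_foldl_ec_iff h

theorem trans_ecPre_iff {l : List (Act × Proc Act)} {α : ActT Act} {z : Proc Act} :
    Trans (ecPre l) α z ↔ ∃ a, α = ActT.act a ∧ (a, z) ∈ l := by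
  rw [ecPre, trans_ecList_iff (List.forall_mem_map.2 fun _ _ => by simp [hasTau])]
  simp [trans_pre_iff, and_comm]

theorem stable_ecPre (l : List (Act × Proc Act)) : Stable (ecPre l) := fun _ h => by
  obtain ⟨_, h, -⟩ := trans_ecPre_iff.1 h
  cases h

theorem act_mem_ready_ecPre {l : List (Act × Proc Act)} {a : Act} :
    ActT.act a ∈ ready (ecPre l) ↔ a ∈ l.map Prod.fst := by
  simp [ready, trans_ecPre_iff]

theorem not_fp_foldl_ec : ∀ {L : List (Proc Act)} {x : Proc Act},
    (∀ y ∈ x :: L, ¬ Fp y) → ¬ Fp (L.foldl ec x)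
  | [], x, h => h x List.mem_cons_self
  | y :: L, x, h => not_fp_foldl_ec (L := L) (x := ec x y) <| by
      simp only [List.mem_cons, forall_eq_or_imp] at h ⊢
      refine ⟨fun hxy => ?_, h.2.2⟩
      cases hxy with
      | ecL h' => exact h.1 h'
      | ecR h' => exact h.2.1 h'

theorem not_fp_ecList {L : List (Proc Act)} (h : ∀ y ∈ L, ¬ Fp y) : ¬ Fp (ecList L) := by
  cases L with
  | nil => nofun
  | cons x L => exact not_fp_foldl_ec h

theorem not_fp_ecPre {l : List (Act × Proc Act)} (h : ∀ x ∈ l, ¬ Fp x.2) :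
    ¬ Fp (ecPre l) :=
  not_fp_ecList <| List.forall_mem_map.2 fun x hx hf => by
    cases hf with | pre hf => exact h x hx hf

theorem not_fp_foldl_disj :
    ∀ {L : List (Proc Act)} {x : Proc Act}, ¬ Fp x → ¬ Fp (L.foldl disj x)
  | [], _, hx => hx
  | y :: _, x, hx => not_fp_foldl_disj (x := disj x y) fun h => by
      cases h with | disj h _ => exact hx h

theorem NFB.not_fp {t : Proc Act} (h : NFB t) : ¬ Fp t := by
  induction h with
  | mk ls hne _ _ ih =>
    obtain ⟨l, ls, rfl⟩ := List.exists_cons_of_ne_nil hne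
    exact not_fp_foldl_disj (not_fp_ecPre (ih l List.mem_cons_self))

theorem eq_of_rtc_tauStepF_of_stable {q r : Proc Act} (hq : Stable q)
    (h : Relation.ReflTransGen tauStepF q r) : r = q := by
  rcases h.cases_head with rfl | ⟨w, hw, -⟩
  · rfl
  · exact absurd hw.1 (hq w)

theorem rtc_foldl_disj_of_mem {z : Proc Act} :
    ∀ {L : List (Proc Act)} {x : Proc Act}, (∀ y ∈ x :: L, ¬ Fp y) → z ∈ x :: L →
      Relation.ReflTransGen tauStepF (L.foldl disj x) z
  | [], _, _, hz => List.mem_singleton.1 hz ▸ .refl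
  | y :: L, x, hF, hz => by
      have hxy : ¬ Fp (disj x y) := fun h => by
        cases h with | disj h _ => exact hF x (by simp) h
      have hF' : ∀ w ∈ disj x y :: L, ¬ Fp w := by
        simpa [hxy] using fun w hw => hF w (by simp [hw])
      have hreach := rtc_foldl_disj_of_mem hF' List.mem_cons_self
      rcases List.mem_cons.1 hz with rfl | hz
      · exact hreach.tail ⟨.disjL, hxy, hF z (by simp)⟩
      rcases List.mem_cons.1 hz with rfl | hz
      · exact hreach.tail ⟨.disjR, hxy, hF z (by simp)⟩
      · exact rtc_foldl_disj_of_mem (L := L) hF' (List.mem_cons_of_mem _ hz)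

theorem rtc_foldl_disj_stable {z : Proc Act} (hz : Stable z) :
    ∀ {L : List (Proc Act)} {x : Proc Act}, (∀ y ∈ L, Stable y) →
      Relation.ReflTransGen tauStepF (L.foldl disj x) z →
      Relation.ReflTransGen tauStepF x z ∨ z ∈ L
  | [], _, _, h => .inl h
  | y :: L, x, hs, h => by
      rcases rtc_foldl_disj_stable hz (L := L) (x := disj x y)
        (fun w hw => hs w (List.mem_cons_of_mem _ hw)) h with h | h
      · rcases h.cases_head with rfl | ⟨w, ⟨hw, -⟩, h⟩
        · exact absurd .disjL (hz x)
        cases hw with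
        | disjL => exact .inl h
        | disjR => exact .inr (eq_of_rtc_tauStepF_of_stable (hs y List.mem_cons_self) h ▸
            List.mem_cons_self)
      · exact .inr (List.mem_cons_of_mem _ h)

theorem epsF_djList_of_mem {L : List (Proc Act)} {z : Proc Act} (hF : ∀ y ∈ L, ¬ Fp y)
    (hz : z ∈ L) (hs : Stable z) : epsF (djList L) z := by
  cases L with
  | nil => cases hz
  | cons x L =>
    exact ⟨rtc_foldl_disj_of_mem hF hz, not_fp_foldl_disj (hF x (by simp)), hF z hz, hs⟩

theorem mem_of_epsF_djList {L : List (Proc Act)} {z : Proc Act} (hs : ∀ y ∈ L, Stable y)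
    (h : epsF (djList L) z) : z ∈ L := by
  cases L with
  | nil => exact absurd .bot h.2.1
  | cons x L =>
    rcases rtc_foldl_disj_stable h.2.2.2 (fun y hy => hs y (List.mem_cons_of_mem _ hy)) h.1
      with h | h
    · exact eq_of_rtc_tauStepF_of_stable (hs x List.mem_cons_self) h ▸ List.mem_cons_self
    · exact List.mem_cons_of_mem _ h

theorem wkF_ecPre_of_epsF {l : List (Act × Proc Act)} {a : Act} {x x' : Proc Act}
    (hl : ¬ Fp (ecPre l)) (hx : (a, x) ∈ l) (h : epsF x x') : wkF a (ecPre l) x' :=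
  ⟨ecPre l, x, .refl, hl, hl, trans_ecPre_iff.2 ⟨a, rfl, hx⟩, h.2.1, h.1, h.2.2.1, h.2.2.2⟩

theorem exists_epsF_of_wkF_ecPre {l : List (Act × Proc Act)} {a : Act} {q : Proc Act}
    (h : wkF a (ecPre l) q) : ∃ x, (a, x) ∈ l ∧ epsF x q := by
  obtain ⟨r, s, hr, -, -, hrs, hs, hsq, hq, hqs⟩ := h
  obtain rfl := eq_of_rtc_tauStepF_of_stable (stable_ecPre l) hr
  obtain ⟨b, hb, hmem⟩ := trans_ecPre_iff.1 hrs
  cases hb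
  exact ⟨s, hmem, hsq, hs, hq, hqs⟩

theorem rsLE_of_rsLT_ecPre {l m : List (Act × Proc Act)} (hl : ¬ Fp (ecPre l))
    (hm : (m.map Prod.fst).Nodup) (h : rsLT (ecPre l) (ecPre m)) {a : Act} {x y : Proc Act}
    (hx : (a, x) ∈ l) (hy : (a, y) ∈ m) : rsLE x y := by
  obtain ⟨R, hR, hlm⟩ := h
  intro x' hx'
  obtain ⟨q', hq', hR'⟩ := (hR _ _ hlm).2.2.2.1 a x' (wkF_ecPre_of_epsF hl hx hx')
  obtain ⟨y', hy', hq'⟩ := exists_epsF_of_wkF_ecPre hq'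
  obtain rfl : y' = y := congrArg Prod.snd (List.inj_on_of_nodup_map hm hy' hy rfl)
  exact ⟨q', hq', R, hR, hR'⟩

theorem not_fp_of_rsLT {p q : Proc Act} (hp : ¬ Fp p) (h : rsLT p q) : ¬ Fp q := by
  obtain ⟨R, hR, hpq⟩ := h
  exact (hR p q hpq).2.2.1 hp

theorem rsLE_of_rsLT {p q : Proc Act} (hp : ¬ Fp p) (h : rsLT p q) : rsLE p q := by
  obtain ⟨R, hR, hpq⟩ := h
  obtain ⟨hps, hqs, hF, -⟩ := hR p q hpq
  intro p' hp'
  obtain rfl := eq_of_rtc_tauStepF_of_stable hps hp'.1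
  exact ⟨q, ⟨.refl, hF hp, hF hp, hqs⟩, R, hR, hpq⟩

theorem deriv_bot_le (x : Proc Act) : Deriv bot x :=
  Deriv.disj_le.trans (Deriv.disj_comm.trans Deriv.disj_bot₁)

theorem deriv_foldl_disj_of_mem {z : Proc Act} :
    ∀ {L : List (Proc Act)} {x : Proc Act}, z ∈ x :: L → Deriv z (L.foldl disj x)
  | [], x, hz => List.mem_singleton.1 hz ▸ .refl x
  | y :: L, x, hz => by
      have hxy : Deriv (disj x y) (L.foldl disj (disj x y)) :=
        deriv_foldl_disj_of_mem (L := L) List.mem_cons_self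
      rcases List.mem_cons.1 hz with rfl | hz
      · exact Deriv.disj_le.trans hxy
      rcases List.mem_cons.1 hz with rfl | hz
      · exact Deriv.disj_le.trans (Deriv.disj_comm.trans hxy)
      · exact deriv_foldl_disj_of_mem (L := L) (List.mem_cons_of_mem _ hz)

theorem deriv_djList_of_mem {L : List (Proc Act)} {z : Proc Act} (hz : z ∈ L) :
    Deriv z (djList L) := by
  cases L with
  | nil => cases hz
  | cons x L => exact deriv_foldl_disj_of_mem hz

theorem foldl_disj_deriv {s : Proc Act} :
    ∀ {L : List (Proc Act)} {x : Proc Act}, (∀ y ∈ x :: L, Deriv y s) →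
      Deriv (L.foldl disj x) s
  | [], x, h => h x List.mem_cons_self
  | y :: L, x, h => foldl_disj_deriv (L := L) (x := disj x y) <| by
      simp only [List.mem_cons, forall_eq_or_imp] at h ⊢
      exact ⟨(Deriv.mono_disj h.1 h.2.1).trans Deriv.disj_idem₁, h.2.2⟩

theorem djList_deriv {L : List (Proc Act)} {s : Proc Act} (h : ∀ y ∈ L, Deriv y s) :
    Deriv (djList L) s := by
  cases L with
  | nil => exact deriv_bot_le s
  | cons x L => exact foldl_disj_deriv h

def DerivEq (x y : Proc Act) : Prop := Deriv x y ∧ Deriv y x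

theorem DerivEq.refl (x : Proc Act) : DerivEq x x := ⟨.refl x, .refl x⟩

theorem DerivEq.symm {x y : Proc Act} (h : DerivEq x y) : DerivEq y x := ⟨h.2, h.1⟩

theorem DerivEq.trans {x y z : Proc Act} (h : DerivEq x y) (h' : DerivEq y z) : DerivEq x z :=
  ⟨h.1.trans h'.1, h'.2.trans h.2⟩

theorem DerivEq.ec {x x' y y' : Proc Act} (h : DerivEq x x') (h' : DerivEq y y') :
    DerivEq (ec x y) (ec x' y') :=
  ⟨.mono_ec h.1 h'.1, .mono_ec h.2 h'.2⟩

theorem derivEq_foldl_ec (L : List (Proc Act)) (x : Proc Act) :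
    DerivEq (L.foldl ec x) (ec x (ecList L)) := by
  induction L generalizing x with
  | nil => exact ⟨.ec_nil₂, .ec_nil₁⟩
  | cons y L ih =>
    exact (ih (ec x y)).trans <| DerivEq.trans ⟨.ec_assoc₁, .ec_assoc₂⟩ <|
      (DerivEq.refl x).ec (ih y).symm

theorem derivEq_ecList_of_perm {L L' : List (Proc Act)} (h : L.Perm L') :
    DerivEq (ecList L) (ecList L') := by
  induction h with
  | nil => exact .refl _
  | cons x _ ih =>
    exact (derivEq_foldl_ec _ x).trans
      (((DerivEq.refl x).ec ih).trans (derivEq_foldl_ec _ x).symm)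
  | swap x y L =>
    have hcons (u v : Proc Act) : DerivEq (ecList (u :: v :: L)) (ec (ec u v) (ecList L)) :=
      derivEq_foldl_ec L (ec u v)
    exact (hcons y x).trans ((DerivEq.ec ⟨.ec_comm, .ec_comm⟩ (.refl _)).trans (hcons x y).symm)
  | trans _ _ ih ih' => exact ih.trans ih'

theorem deriv_ecList_of_forall₂ {L L' : List (Proc Act)} (h : List.Forall₂ Deriv L L') :
    Deriv (ecList L) (ecList L') := by
  cases h with
  | nil => exact .refl _
  | cons hx hL =>
    exact List.rel_foldl (R := Deriv) (P := Deriv) (fun _ _ h _ _ h' => .mono_ec h h') hx hL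

theorem deriv_ecPre_of_perm_keys {l m : List (Act × Proc Act)}
    (hkeys : (l.map Prod.fst).Perm (m.map Prod.fst))
    (h : ∀ a x y, (a, x) ∈ l → (a, y) ∈ m → Deriv x y) : Deriv (ecPre l) (ecPre m) := by
  obtain ⟨m', hmm', hm'⟩ := List.exists_perm_map_eq_of_perm hkeys.symm
  have hfst : List.Forall₂ (fun x y => x.1 = y.1) l m' :=
    List.forall₂_map_right_iff.1 <| List.forall₂_map_left_iff.1 <|
      hm' ▸ List.forall₂_same.2 fun _ _ => rfl
  have hpre : List.Forall₂ (fun x y => x.1 = y.1 ∧ Deriv x.2 y.2) l m' := by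
    refine List.forall₂_iff_zip.2 ⟨hfst.length_eq, fun {x y} hxy => ?_⟩
    have hkey : x.1 = y.1 := List.forall₂_zip hfst hxy
    obtain ⟨hx, hy⟩ := List.of_mem_zip hxy
    exact ⟨hkey, h x.1 x.2 y.2 hx (hkey ▸ hmm'.symm.subset hy)⟩
  refine (deriv_ecList_of_forall₂ (List.rel_map (fun x y hxy => ?_) hpre)).trans
    (derivEq_ecList_of_perm (hmm'.symm.map _)).1
  rw [hxy.1]
  exact .mono_pre hxy.2

theorem deriv_ecPre_of_rsLT {l m : List (Act × Proc Act)} (hl : (l.map Prod.fst).Nodup)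
    (hm : (m.map Prod.fst).Nodup) (hlF : ¬ Fp (ecPre l))
    (hsub : ∀ a x y, (a, x) ∈ l → (a, y) ∈ m → rsLE x y → Deriv x y)
    (h : rsLT (ecPre l) (ecPre m)) : Deriv (ecPre l) (ecPre m) := by
  have hready : ready (ecPre l) = ready (ecPre m) := by
    obtain ⟨R, hR, hlm⟩ := h
    exact (hR _ _ hlm).2.2.2.2 hlF
  have hkeys : (l.map Prod.fst).Perm (m.map Prod.fst) :=
    (List.perm_ext_iff_of_nodup hl hm).2 fun a => by
      rw [← act_mem_ready_ecPre, ← act_mem_ready_ecPre, hready]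
  exact deriv_ecPre_of_perm_keys hkeys fun a x y hx hy =>
    hsub a x y hx hy (rsLE_of_rsLT_ecPre hlF hm h hx hy)

theorem NFB.deriv_of_rsLE {t : Proc Act} (ht : NFB t) :
    ∀ {u : Proc Act}, NFB u → rsLE t u → Deriv t u := by
  induction ht with
  | mk ls _ hnd hsub ih =>
    intro u hu h
    obtain ⟨ms, _, hmnd, hmsub⟩ := hu
    have hF : ∀ l ∈ ls, ¬ Fp (ecPre l) := fun l hl =>
      not_fp_ecPre fun x hx => (hsub l hl x hx).not_fp
    refine djList_deriv (List.forall_mem_map.2 fun l hl => ?_)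
    obtain ⟨q, hq, hlq⟩ := h _ (epsF_djList_of_mem (List.forall_mem_map.2 hF)
      (List.mem_map_of_mem hl) (stable_ecPre l))
    obtain ⟨m, hm, rfl⟩ := List.mem_map.1
      (mem_of_epsF_djList (List.forall_mem_map.2 fun m _ => stable_ecPre m) hq)
    have hlm : Deriv (ecPre l) (ecPre m) :=
      deriv_ecPre_of_rsLT (hnd l hl) (hmnd m hm) (hF l hl)
        (fun a x y hx hy => ih l hl (a, x) hx (hmsub m hm (a, y) hy)) hlq
    exact hlm.trans (deriv_djList_of_mem (List.mem_map_of_mem hm))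

/-- Completeness of AX_CLL for normal forms. -/
theorem stmt18 {Act : Type} (t₁ t₂ : Proc Act) (h₁ : NF t₁) (h₂ : NF t₂)
    (h : rsLT t₁ t₂) : Deriv t₁ t₂ := by
  rcases h₁ with h₁ | rfl
  · rcases h₂ with h₂ | rfl
    · exact h₁.deriv_of_rsLE h₂ (rsLE_of_rsLT h₁.not_fp h)
    · exact absurd .bot (not_fp_of_rsLT h₁.not_fp h)
  · exact deriv_bot_le t₂

end Proc
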